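/- Let H be a complex Hilbert space and let N_1, …, N_s be closed subspaces of H. The algebraic sum N_1 + ⋯ + N_s is closed if and only if 0 is not a cluster point (accumulation point) of the spectrum of the positive operator P_{N_1} + ⋯ + P_{N_s}. In that case, the range of P_{N_1} + ⋯ + P_{N_s} equals N_1 + ⋯ + N_s. -/

import Mathlib

/-!
`T = ∑ P_{N_i}` is self-adjoint with `ker T = (N_1 + ⋯ + N_s)ᗮ` and `range T ⊆ N_1 + ⋯ + N_s`,
so `range T` is dense in the closure of the sum, and equals the sum as soon as it is closed.

For a self-adjoint `T`, closedness of the range and isolation of `0` in the spectrum are tied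
together: if `0` is isolated, the functional calculus gives `S` with `T S T = T`, and `range T` is
the fixed-point set of `T S`; conversely, a bound `c ‖x‖ ≤ ‖T x‖` on `(ker T)ᗮ` keeps `T - z`
bounded below, hence invertible, for `0 < |z| < c`.

If the sum is closed, the open mapping theorem writes each `x` in it as `∑ v_i` with
`‖v_i‖ ≤ C ‖x‖`, and `‖x‖² = ∑ ⟪v_i, P_i x⟫` together with Cauchy–Schwarz gives
`‖x‖ ≤ C² s ‖T x‖` on `N_1 + ⋯ + N_s = (ker T)ᗮ`.
-/

open scoped InnerProductSpace NNReal

/-- The orthogonal projection onto a subspace `K` of a complex inner product space,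
as a bounded operator on the whole space (junk value `0` if `K` does not admit an
orthogonal projection; for a closed subspace of a Hilbert space it is the genuine
orthogonal projection). -/
noncomputable def proj {H : Type*} [NormedAddCommGroup H] [InnerProductSpace ℂ H]
    (K : Submodule ℂ H) : H →L[ℂ] H :=
  letI := Classical.propDecidable (Submodule.HasOrthogonalProjection K)
  if h : Submodule.HasOrthogonalProjection K then
    haveI := h
    K.subtypeL.comp (Submodule.orthogonalProjectionOnto K)
  else 0

theorem proj_eq_starProjection {H : Type*} [NormedAddCommGroup H] [InnerProductSpace ℂ H]
    (K : Submodule ℂ H) [K.HasOrthogonalProjection] : proj K = K.starProjection := by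
  rw [proj, dif_pos ‹_›]
  rfl

section General

variable {E F R : Type*} [Semiring R] [AddCommMonoid E] [Module R E] [TopologicalSpace E]
  [AddCommMonoid F] [Module R F] [TopologicalSpace F] [T2Space F]

theorem ContinuousLinearMap.isClosed_range_of_apply_apply_apply_eq (T : E →L[R] F) (S : F →L[R] E)
    (h : ∀ x, T (S (T x)) = T x) : IsClosed (Set.range T) := by
  have : Set.range T = {y | T (S y) = y} :=
    Set.ext fun y ↦ ⟨by rintro ⟨x, rfl⟩; exact h x, fun hy ↦ ⟨S y, hy⟩⟩
  rw [this]
  exact isClosed_eq (by fun_prop) continuous_id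

end General

section InnerProduct

variable {𝕜 E : Type*} [RCLike 𝕜] [NormedAddCommGroup E] [InnerProductSpace 𝕜 E]

theorem mul_norm_add_le_norm_add_of_inner_eq_zero {u w a b : E} {m : ℝ} (hm : 0 ≤ m)
    (huw : ⟪u, w⟫_𝕜 = 0) (hab : ⟪a, b⟫_𝕜 = 0) (ha : m * ‖u‖ ≤ ‖a‖) (hb : m * ‖w‖ ≤ ‖b‖) :
    m * ‖u + w‖ ≤ ‖a + b‖ := by
  rw [mul_self_le_mul_self_iff (by positivity) (norm_nonneg _),
    norm_add_sq_eq_norm_sq_add_norm_sq_of_inner_eq_zero a b hab]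
  calc m * ‖u + w‖ * (m * ‖u + w‖) = m * ‖u‖ * (m * ‖u‖) + m * ‖w‖ * (m * ‖w‖) := by
        rw [mul_mul_mul_comm, norm_add_sq_eq_norm_sq_add_norm_sq_of_inner_eq_zero u w huw]; ring
    _ ≤ ‖a‖ * ‖a‖ + ‖b‖ * ‖b‖ := by
        gcongr

variable [CompleteSpace E]

theorem ContinuousLinearMap.isUnit_of_isSelfAdjoint_of_antilipschitz {D : E →L[𝕜] E}
    (hD : IsSelfAdjoint D) {K : ℝ≥0} (hK : AntilipschitzWith K D) : IsUnit D := by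
  rw [isUnit_iff_bijective, bijective_iff_dense_range_and_antilipschitz]
  refine ⟨?_, K, hK⟩
  have hker : D.ker = ⊥ := LinearMap.ker_eq_bot.mpr hK.injective
  rw [← hD.adjoint_eq, ← orthogonal_ker, hker, Submodule.bot_orthogonal_eq_top]

theorem IsSelfAdjoint.min_mul_norm_le_norm_sub_smul {T : E →L[𝕜] E} (hT : IsSelfAdjoint T)
    {c : ℝ} (hc : ∀ x ∈ T.kerᗮ, c * ‖x‖ ≤ ‖T x‖) {z : 𝕜} (hz : ‖z‖ ≤ c) (x : E) :
    min (c - ‖z‖) ‖z‖ * ‖x‖ ≤ ‖T x - z • x‖ := by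
  have : CompleteSpace T.ker := T.isClosed_ker.completeSpace_coe
  set w := T.ker.starProjection x
  set u := x - w
  have hw : w ∈ T.ker := T.ker.starProjection_apply_mem x
  have hu : u ∈ T.kerᗮ := T.ker.sub_starProjection_mem_orthogonal x
  have hTu : T u ∈ T.kerᗮ := by
    rw [← ContinuousLinearMap.IsStarNormal.orthogonal_range hT.isStarNormal]
    exact Submodule.le_orthogonal_orthogonal _ ⟨u, rfl⟩
  have hsplit : T x - z • x = (T u - z • u) + -(z • w) := by
    have hTw : T w = 0 := hw
    rw [show x = u + w by simp [u], map_add, hTw, smul_add]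
    abel
  rw [hsplit, show x = u + w by simp [u]]
  refine mul_norm_add_le_norm_add_of_inner_eq_zero (𝕜 := 𝕜) (by simpa using hz)
    (T.ker.inner_left_of_mem_orthogonal hw hu)
    (T.ker.inner_left_of_mem_orthogonal (T.ker.neg_mem (T.ker.smul_mem z hw))
      (T.kerᗮ.sub_mem hTu (T.kerᗮ.smul_mem z hu)))
    ?_ ?_
  · calc min (c - ‖z‖) ‖z‖ * ‖u‖ ≤ (c - ‖z‖) * ‖u‖ := by gcongr; exact min_le_left _ _
      _ = c * ‖u‖ - ‖z • u‖ := by rw [norm_smul]; ring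
      _ ≤ ‖T u‖ - ‖z • u‖ := by gcongr; exact hc u hu
      _ ≤ ‖T u - z • u‖ := norm_sub_norm_le _ _
  · rw [norm_neg, norm_smul]
    gcongr
    exact min_le_right _ _

end InnerProduct

section Spectrum

open Filter

variable {H : Type*} [NormedAddCommGroup H] [InnerProductSpace ℂ H] [CompleteSpace H]
  {T : H →L[ℂ] H}

theorem IsSelfAdjoint.not_accPt_zero_spectrum_of_forall_mul_norm_le {c : ℝ}
    (hT : IsSelfAdjoint T) (hc₀ : 0 < c) (hc : ∀ x ∈ T.kerᗮ, c * ‖x‖ ≤ ‖T x‖) : ¬ AccPt (0 : ℂ) (𝓟 (spectrum ℂ T)) := by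
  rw [accPt_iff_frequently_nhdsNE, not_frequently]
  filter_upwards [mem_nhdsWithin_of_mem_nhds (Metric.ball_mem_nhds 0 hc₀), self_mem_nhdsWithin]
    with z hzc hz_ne hzσ
  rw [mem_ball_zero_iff] at hzc
  have hz₀ : 0 < ‖z‖ := norm_pos_iff.mpr hz_ne
  have hzsa : IsSelfAdjoint z := by
    rw [hT.mem_spectrum_eq_re hzσ]; exact Complex.conj_ofReal _
  set m := min (c - ‖z‖) ‖z‖
  have hm : 0 < m := lt_min (by linarith) hz₀
  have hanti : AntilipschitzWith ⟨m⁻¹, by positivity⟩ (algebraMap ℂ (H →L[ℂ] H) z - T) := by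
    refine ContinuousLinearMap.antilipschitz_of_bound _ fun x ↦ ?_
    change ‖x‖ ≤ m⁻¹ * _
    rw [inv_mul_eq_div, le_div_iff₀' hm]
    simpa [Algebra.algebraMap_eq_smul_one, norm_sub_rev (z • x)] using
      hT.min_mul_norm_le_norm_sub_smul hc hzc.le x
  exact spectrum.mem_iff.mp hzσ <|
    ContinuousLinearMap.isUnit_of_isSelfAdjoint_of_antilipschitz ((hzsa.algebraMap _).sub hT) hanti

theorem IsSelfAdjoint.isClosed_range_of_not_accPt_zero_spectrum (hT : IsSelfAdjoint T)
    (h : ¬ AccPt (0 : ℂ) (𝓟 (spectrum ℂ T))) : IsClosed (T.range : Set H) := by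
  rw [accPt_iff_frequently_nhdsNE, not_frequently] at h
  obtain ⟨ε, hε, hgap⟩ := Metric.eventually_nhds_iff.mp (eventually_nhdsWithin_iff.mp h)
  have hgapℝ : ∀ t ∈ spectrum ℝ T, t ≠ 0 → ε ≤ |t| := fun t ht ht₀ ↦ by
    by_contra! hlt
    refine hgap (y := (t : ℂ)) ?_ (by simpa using ht₀) (spectrum.algebraMap_mem ℂ ht)
    rwa [dist_zero_right, Complex.norm_real, Real.norm_eq_abs]
  -- `g t = t⁻¹` on the spectrum away from `0`, so that `T g(T) T = T`.
  set g : ℝ → ℝ := fun t ↦ t / max (t ^ 2) (ε ^ 2)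
  have hg : Continuous g :=
    continuous_id.div (by fun_prop) fun t ↦ (lt_max_of_lt_right (by positivity)).ne'
  have hTgT : T * cfc g T * T = T := by
    calc T * cfc g T * T = cfc (fun t ↦ t * g t * t) T := by
          rw [cfc_mul (fun t ↦ t * g t) (fun t ↦ t) T (continuous_id.mul hg).continuousOn
            (continuousOn_id' _), cfc_mul (fun t ↦ t) g T (continuousOn_id' _) hg.continuousOn,
            cfc_id' ℝ T hT]
      _ = cfc (fun t ↦ t) T := cfc_congr fun t ht ↦ by
          rcases eq_or_ne t 0 with rfl | ht₀
          · simp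
          · have : ε ^ 2 ≤ t ^ 2 := by
              rw [← sq_abs t]; exact pow_le_pow_left₀ hε.le (hgapℝ t ht ht₀) 2
            simp only [g, max_eq_left this]
            field_simp
      _ = T := cfc_id' ℝ T hT
  rw [LinearMap.coe_range, ContinuousLinearMap.coe_coe]
  exact T.isClosed_range_of_apply_apply_apply_eq (cfc g T) fun x ↦ congr($hTgT x)

end Spectrum

theorem Submodule.exists_sum_eq_and_norm_le_of_isClosed_iSup {𝕜 E ι : Type*}
    [NontriviallyNormedField 𝕜] [NormedAddCommGroup E] [NormedSpace 𝕜 E] [CompleteSpace E]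
    [Fintype ι] (N : ι → Submodule 𝕜 E) [∀ i, CompleteSpace (N i)]
    (hM : IsClosed ((⨆ i, N i : Submodule 𝕜 E) : Set E)) :
    ∃ C > 0, ∀ x ∈ ⨆ i, N i, ∃ v : ∀ i, N i, ∑ i, (v i : E) = x ∧ ∀ i, ‖(v i : E)‖ ≤ C * ‖x‖ := by
  have : CompleteSpace (⨆ i, N i : Submodule 𝕜 E) := hM.completeSpace_coe
  let S : (∀ i, N i) →L[𝕜] E := ∑ i, (N i).subtypeL ∘L ContinuousLinearMap.proj i
  have hS : ∀ v, S v = ∑ i, (v i : E) := fun v ↦ by simp [S]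
  let S' : (∀ i, N i) →L[𝕜] (⨆ i, N i : Submodule 𝕜 E) := S.codRestrict _ fun v ↦ by
    rw [hS]; exact Submodule.sum_mem _ fun i _ ↦ Submodule.mem_iSup_of_mem i (v i).2
  have hS' : Function.Surjective S' := by
    rintro ⟨x, hx⟩
    obtain ⟨v, hv⟩ :=
      (Submodule.mem_iSup_finset_iff_exists_sum (s := .univ) N x).mp (by simpa using hx)
    exact ⟨v, Subtype.ext <| (hS v).trans hv⟩
  obtain ⟨C, hC, hpre⟩ := S'.exists_preimage_norm_le hS'
  refine ⟨C, hC, fun x hx ↦ ?_⟩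
  obtain ⟨v, hv, hvC⟩ := hpre ⟨x, hx⟩
  exact ⟨v, (hS v).symm.trans congr(($hv : E)), fun i ↦ (norm_le_pi_norm v i).trans hvC⟩

section SumStarProjection

variable {𝕜 E ι : Type*} [RCLike 𝕜] [NormedAddCommGroup E] [InnerProductSpace 𝕜 E] [Fintype ι]
  (N : ι → Submodule 𝕜 E) [∀ i, (N i).HasOrthogonalProjection]

theorem re_inner_sum_starProjection_self (x : E) :
    RCLike.re ⟪(∑ i, (N i).starProjection) x, x⟫_𝕜 = ∑ i, ‖(N i).starProjection x‖ ^ 2 := by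
  rw [sum_apply, sum_inner, map_sum]
  refine Finset.sum_congr rfl fun i _ ↦ ?_
  rw [Submodule.re_inner_starProjection_eq_normSq, Submodule.starProjection_apply,
    Submodule.coe_norm]

theorem ker_sum_starProjection :
    (∑ i, (N i).starProjection).ker = (⨆ i, N i)ᗮ := by
  ext x
  simp only [LinearMap.mem_ker, ContinuousLinearMap.coe_coe, ← Submodule.iInf_orthogonal,
    Submodule.mem_iInf, ← Submodule.starProjection_apply_eq_zero_iff]
  refine ⟨fun h i ↦ ?_, fun h ↦ by simp [sum_apply, h]⟩
  have hsum : ∑ i, ‖(N i).starProjection x‖ ^ 2 = 0 := by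
    rw [← re_inner_sum_starProjection_self, h, inner_zero_left, map_zero]
  simpa using (Finset.sum_eq_zero_iff_of_nonneg fun i _ ↦ sq_nonneg _).mp hsum i
    (Finset.mem_univ i)

theorem range_sum_starProjection_le_iSup :
    (∑ i, (N i).starProjection).range ≤ ⨆ i, N i := by
  rintro - ⟨x, rfl⟩
  simpa [sum_apply] using
    Submodule.sum_mem _ fun i _ ↦ Submodule.mem_iSup_of_mem i ((N i).starProjection_apply_mem x)

theorem re_inner_sum_le_sum_norm_mul_norm_starProjection
    (v : ∀ i, N i) (x : E) :
    RCLike.re ⟪∑ i, (v i : E), x⟫_𝕜 ≤ ∑ i, ‖(v i : E)‖ * ‖(N i).starProjection x‖ := by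
  rw [sum_inner, map_sum]
  refine Finset.sum_le_sum fun i _ ↦ ?_
  calc RCLike.re ⟪(v i : E), x⟫_𝕜 = RCLike.re ⟪(v i : E), (N i).starProjection x⟫_𝕜 := by
        rw [← Submodule.inner_starProjection_left_eq_right,
          (N i).starProjection_eq_self_iff.mpr (v i).2]
    _ ≤ ‖(v i : E)‖ * ‖(N i).starProjection x‖ :=
        (RCLike.re_le_norm _).trans (norm_inner_le_norm _ _)

theorem sq_sum_norm_starProjection_le (x : E) :
    (∑ i, ‖(N i).starProjection x‖) ^ 2 ≤
      Fintype.card ι * (‖(∑ i, (N i).starProjection) x‖ * ‖x‖) := by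
  calc (∑ i, ‖(N i).starProjection x‖) ^ 2
        ≤ Fintype.card ι * ∑ i, ‖(N i).starProjection x‖ ^ 2 := sq_sum_le_card_mul_sum_sq
    _ ≤ Fintype.card ι * (‖(∑ i, (N i).starProjection) x‖ * ‖x‖) := by
        rw [← re_inner_sum_starProjection_self]
        gcongr
        exact (RCLike.re_le_norm _).trans (norm_inner_le_norm _ _)

variable [CompleteSpace E]

theorem isSelfAdjoint_sum_starProjection :
    IsSelfAdjoint (∑ i, (N i).starProjection) :=
  isSelfAdjoint_sum _ fun i _ ↦ isSelfAdjoint_starProjection (N i)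

theorem range_sum_starProjection_eq_iSup_of_isClosed
    (h : IsClosed ((∑ i, (N i).starProjection).range : Set E)) :
    (∑ i, (N i).starProjection).range = ⨆ i, N i := by
  refine (range_sum_starProjection_le_iSup N).antisymm ?_
  calc ⨆ i, N i ≤ (⨆ i, N i)ᗮᗮ := Submodule.le_orthogonal_orthogonal _
    _ = (∑ i, (N i).starProjection).range := by
      rw [← ker_sum_starProjection, ← ContinuousLinearMap.IsStarNormal.orthogonal_range
        (isSelfAdjoint_sum_starProjection N).isStarNormal,
        Submodule.orthogonal_orthogonal_eq_closure, h.submodule_topologicalClosure_eq]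

end SumStarProjection

theorem exists_mul_norm_le_norm_sum_starProjection {𝕜 E ι : Type*} [RCLike 𝕜]
    [NormedAddCommGroup E] [InnerProductSpace 𝕜 E] [CompleteSpace E] [Fintype ι]
    (N : ι → Submodule 𝕜 E) [∀ i, CompleteSpace (N i)]
    (hM : IsClosed ((⨆ i, N i : Submodule 𝕜 E) : Set E)) :
    ∃ c > 0, ∀ x ∈ ⨆ i, N i, c * ‖x‖ ≤ ‖(∑ i, (N i).starProjection) x‖ := by
  obtain ⟨C, hC, hdecomp⟩ := Submodule.exists_sum_eq_and_norm_le_of_isClosed_iSup N hM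
  set K := C ^ 2 * Fintype.card ι
  refine ⟨(K + 1)⁻¹, by positivity, fun x hx ↦ ?_⟩
  set A := ∑ i, ‖(N i).starProjection x‖
  set Tx := ‖(∑ i, (N i).starProjection) x‖
  obtain ⟨v, hvx, hv⟩ := hdecomp x hx
  have hxA : ‖x‖ ^ 2 ≤ C * ‖x‖ * A := calc
    ‖x‖ ^ 2 = RCLike.re ⟪∑ i, (v i : E), x⟫_𝕜 := by rw [hvx, inner_self_eq_norm_sq]
    _ ≤ ∑ i, ‖(v i : E)‖ * ‖(N i).starProjection x‖ :=
        re_inner_sum_le_sum_norm_mul_norm_starProjection N v x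
    _ ≤ ∑ i, C * ‖x‖ * ‖(N i).starProjection x‖ := by gcongr with i; exact hv i
    _ = C * ‖x‖ * A := (Finset.mul_sum _ _ _).symm
  have hATx : A ^ 2 ≤ Fintype.card ι * (Tx * ‖x‖) := sq_sum_norm_starProjection_le N x
  have hxK : ‖x‖ ≤ K * Tx := by
    rcases (norm_nonneg x).eq_or_lt with hx₀ | hx₀
    · rw [← hx₀]; positivity
    have hxCA : ‖x‖ ≤ C * A := le_of_mul_le_mul_right (by nlinarith) hx₀
    refine le_of_mul_le_mul_right ?_ hx₀
    calc ‖x‖ * ‖x‖ ≤ C ^ 2 * A ^ 2 := by nlinarith [norm_nonneg x]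
      _ ≤ C ^ 2 * (Fintype.card ι * (Tx * ‖x‖)) := by gcongr
      _ = K * Tx * ‖x‖ := by ring
  rw [inv_mul_le_iff₀ (by positivity)]
  linarith [show 0 ≤ Tx from norm_nonneg _]

theorem not_accPt_zero_spectrum_sum_starProjection {H ι : Type*} [NormedAddCommGroup H]
    [InnerProductSpace ℂ H] [CompleteSpace H] [Fintype ι] (N : ι → Submodule ℂ H)
    [∀ i, CompleteSpace (N i)] (hM : IsClosed ((⨆ i, N i : Submodule ℂ H) : Set H)) :
    ¬ AccPt (0 : ℂ) (Filter.principal (spectrum ℂ (∑ i, (N i).starProjection))) := by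
  have : CompleteSpace (⨆ i, N i : Submodule ℂ H) := hM.completeSpace_coe
  obtain ⟨c, hc, hbound⟩ := exists_mul_norm_le_norm_sum_starProjection N hM
  refine (isSelfAdjoint_sum_starProjection N).not_accPt_zero_spectrum_of_forall_mul_norm_le hc ?_
  rwa [ker_sum_starProjection, Submodule.orthogonal_orthogonal]

theorem stmt15 {H : Type*} [NormedAddCommGroup H] [InnerProductSpace ℂ H] [CompleteSpace H]
    {s : ℕ} (N : Fin s → Submodule ℂ H) (hN : ∀ i, IsClosed ((N i : Set H))) :
    (IsClosed ((⨆ i, N i : Submodule ℂ H) : Set H) ↔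
        ¬ AccPt (0 : ℂ) (Filter.principal (spectrum ℂ (∑ i, proj (N i))))) ∧
      (IsClosed ((⨆ i, N i : Submodule ℂ H) : Set H) →
        LinearMap.range ((∑ i, proj (N i) : H →L[ℂ] H) : H →ₗ[ℂ] H) = ⨆ i, N i) := by
  have : ∀ i, CompleteSpace (N i) := fun i ↦ (hN i).completeSpace_coe
  have hproj : ∑ i, proj (N i) = ∑ i, (N i).starProjection :=
    Finset.sum_congr rfl fun i _ ↦ proj_eq_starProjection (N i)
  have hT := isSelfAdjoint_sum_starProjection N
  rw [hproj]
  have range_eq_of_not_accPt (h : ¬ AccPt (0 : ℂ) (Filter.principal (spectrum ℂ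
      (∑ i, (N i).starProjection)))) : (∑ i, (N i).starProjection).range = ⨆ i, N i :=
    range_sum_starProjection_eq_iSup_of_isClosed N
      (hT.isClosed_range_of_not_accPt_zero_spectrum h)
  refine ⟨⟨not_accPt_zero_spectrum_sum_starProjection N, fun h ↦ ?_⟩,
    fun hM ↦ range_eq_of_not_accPt (not_accPt_zero_spectrum_sum_starProjection N hM)⟩
  rw [← range_eq_of_not_accPt h]
  exact hT.isClosed_range_of_not_accPt_zero_spectrum h
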